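/- arXiv:2204.12936 — 4 statements merged into one kernel-verified Lean document; each statement's English description precedes it below -/
import Mathlib

section
/- Let π be a permutation of size n, written as π = μ₁A₁μ₂A₂⋯μₖAₖ where μ₁,…,μₖ are all the left-to-right maxima of π (and the Aᵢ are possibly empty blocks of remaining entries). Then applying one pass of bubblesort to π yields B(π) = A₁μ₁A₂μ₂⋯Aₖμₖ. -/
/-- One pass of bubblesort on a list of naturals. -/
def bpass : List ℕ → List ℕ
  | [] => []
  | [a] => [a]
  | a :: b :: l => if b < a then b :: bpass (a :: l) else a :: bpass (b :: l)

/-- The identity permutation 1 2 ... n as a list. -/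
def idList (n : ℕ) : List ℕ := List.map (· + 1) (List.range n)

/-- `l` is (the word of) a permutation of size `n`, i.e. a rearrangement of 1,...,n. -/
def IsPermList (n : ℕ) (l : List ℕ) : Prop := l.Perm (idList n)

/-- position `j` of `l` holds a left-to-right maximum. -/
def IsLTRMax (l : List ℕ) (j : ℕ) : Prop :=
  j < l.length ∧ ∀ i < j, l.getD i 0 < l.getD j 0

instance (l : List ℕ) (j : ℕ) : Decidable (IsLTRMax l j) := by
  unfold IsLTRMax; infer_instance

/-- the number of left-to-right maxima of `l`. -/
def ltrCount (l : List ℕ) : ℕ :=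
  ((List.range l.length).filter fun j => decide (IsLTRMax l j)).length

/-- the length of the longest suffix of `l` consisting of left-to-right maxima. -/
def suffLen (l : List ℕ) : ℕ :=
  ((List.range l.length).takeWhile fun j => decide (IsLTRMax l (l.length - 1 - j))).length

/-- `σ` is a node of the tree `T(π)` of iterated bubblesort preimages. -/
def IsNode (n : ℕ) (π σ : List ℕ) : Prop :=
  IsPermList n σ ∧ ∃ j, bpass^[j] σ = π

/-- `σ` is a node of `T(π)` at height `j` (j passes needed to reach π, and no fewer). -/
def IsNodeAt (n : ℕ) (π σ : List ℕ) (j : ℕ) : Prop :=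
  IsPermList n σ ∧ bpass^[j] σ = π ∧ ∀ i < j, bpass^[i] σ ≠ π

/-- `τ` is a leaf: it has no child, i.e. no bubblesort preimage other than itself. -/
def IsLeafNode (n : ℕ) (τ : List ℕ) : Prop :=
  ¬ ∃ ρ, IsPermList n ρ ∧ ρ ≠ τ ∧ bpass ρ = τ

/-- `T(π)` and `T(τ)` are isomorphic as rooted trees: there is a bijection between
their node sets sending root to root and commuting with the parent map `bpass`. -/
def TreeIso (n : ℕ) (π τ : List ℕ) : Prop :=
  ∃ φ : List ℕ → List ℕ,
    (∀ σ, IsNode n π σ → IsNode n τ (φ σ)) ∧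
    (∀ σ σ', IsNode n π σ → IsNode n π σ' → φ σ = φ σ' → σ = σ') ∧
    (∀ ρ, IsNode n τ ρ → ∃ σ, IsNode n π σ ∧ φ σ = ρ) ∧
    φ π = τ ∧
    (∀ σ, IsNode n π σ → σ ≠ π → φ (bpass σ) = bpass (φ σ))

lemma bpass_cons_of_forall_mem_head?_le {m : ℕ} {l : List ℕ} (h : ∀ b ∈ l.head?, m ≤ b) :
    bpass (m :: l) = m :: bpass l := by
  cases l with
  | nil => simp [bpass]
  | cons b l => simp [bpass, Nat.not_lt.mpr (h b rfl)]

lemma bpass_cons_append_of_forall_lt {m : ℕ} {A : List ℕ} (l : List ℕ) (h : ∀ x ∈ A, x < m) :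
    bpass (m :: (A ++ l)) = A ++ bpass (m :: l) := by
  induction A with
  | nil => rfl
  | cons a A ih =>
    simp only [List.cons_append, bpass, if_pos (h a List.mem_cons_self),
      ih fun x hx => h x (List.mem_cons_of_mem a hx)]

/-- Each maximum `m` is carried across its block `A` and then stops in front of the next,
larger, maximum, which takes over. -/
theorem bpass_flatMap_cons (l : List (ℕ × List ℕ)) (hc : (l.map Prod.fst).IsChain (· < ·))
    (hA : ∀ p ∈ l, ∀ x ∈ p.2, x < p.1) :
    bpass (l.flatMap fun p => p.1 :: p.2) = l.flatMap fun p => p.2 ++ [p.1] := by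
  induction l with
  | nil => simp [bpass]
  | cons p l ih =>
    obtain ⟨m, A⟩ := p
    have hhead : ∀ b ∈ (l.flatMap fun p => p.1 :: p.2).head?, m ≤ b := by
      cases l with
      | nil => simp
      | cons q l => simpa using (List.isChain_cons_cons.mp hc).1.le
    have hl : bpass (l.flatMap fun p => p.1 :: p.2) = l.flatMap fun p => p.2 ++ [p.1] :=
      ih (List.IsChain.of_cons hc) fun q hq => hA q (List.mem_cons_of_mem _ hq)
    simp only [List.flatMap_cons, List.cons_append]
    rw [bpass_cons_append_of_forall_lt _ (hA (m, A) List.mem_cons_self),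
      bpass_cons_of_forall_mem_head?_le hhead, hl, List.append_assoc, List.singleton_append]

theorem stmt_0_general (k : ℕ) (π : List ℕ)
    (ms : List ℕ) (As : List (List ℕ))
    (hms : ms.length = k) (hAs : As.length = k)
    (hchain : ms.Chain' (· < ·))
    (hA : ∀ i < k, ∀ x ∈ As.getD i [], x < ms.getD i 0)
    (hdec : π = (ms.zip As).flatMap fun p => p.1 :: p.2) :
    bpass π = (ms.zip As).flatMap fun p => p.2 ++ [p.1] := by
  subst hdec
  apply bpass_flatMap_cons
  · rwa [List.map_fst_zip (by omega)]
  · intro p hp x hx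
    obtain ⟨i, hi, rfl⟩ := List.mem_iff_getElem.mp hp
    rw [List.length_zip] at hi
    rw [List.getElem_zip] at hx ⊢
    simpa only [List.getD_eq_getElem _ _ (show i < ms.length by omega)] using
      hA i (by omega) x (by rwa [List.getD_eq_getElem _ _ (by omega)])

/-- If `π = μ₁A₁μ₂A₂⋯μₖAₖ` where the `μᵢ` are all the left-to-right maxima of `π`
(each `μᵢ` exceeds all previous entries and every entry of `Aᵢ` is smaller than `μᵢ`),
then `bpass π = A₁μ₁A₂μ₂⋯Aₖμₖ`. -/
theorem stmt_0 (n k : ℕ) (π : List ℕ) (hπ : IsPermList n π)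
    (ms : List ℕ) (As : List (List ℕ))
    (hms : ms.length = k) (hAs : As.length = k)
    (hchain : ms.Chain' (· < ·))
    (hA : ∀ i < k, ∀ x ∈ As.getD i [], x < ms.getD i 0)
    (hdec : π = (ms.zip As).flatMap fun p => p.1 :: p.2) :
    bpass π = (ms.zip As).flatMap fun p => p.2 ++ [p.1] :=
  stmt_0_general k π ms As hms hAs hchain hA hdec
end

section
/- A permutation π of size n is in the image of the bubblesort operator B (i.e., there exists τ with B(τ) = π) if and only if π ends with its maximum, i.e., πₙ = n. -/
/-!
One pass of bubblesort carries the maximum of `τ` to the last position, so every image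
`B(τ)` ends with `n`. Conversely, if `π = π' n` then `τ = n π'` is a preimage: the leading
`n` is swapped past every other entry.
-/

theorem bpass_cons_of_forall_lt {a : ℕ} {l : List ℕ} (h : ∀ x ∈ l, x < a) :
    bpass (a :: l) = l ++ [a] := by
  induction l with
  | nil => simp [bpass]
  | cons b l ih => simp_all [bpass]

theorem max?_cons_cons {α : Type*} [Max α] (a b : α) (l : List α) :
    (a :: b :: l).max? = (max a b :: l).max? := by
  rw [List.max?_cons', List.max?_cons']
  rfl

theorem getLast?_bpass (l : List ℕ) : (bpass l).getLast? = l.max? := by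
  induction l using bpass.induct with
  | case1 | case2 => simp [bpass]
  | case3 a b l h ih =>
    rw [bpass, if_pos h, max?_cons_cons, max_eq_left h.le, List.getLast?_cons, ih,
      List.max?_cons']
    rfl
  | case4 a b l h ih =>
    rw [bpass, if_neg h, max?_cons_cons, max_eq_right (not_lt.mp h), List.getLast?_cons, ih,
      List.max?_cons']
    rfl

theorem mem_idList {n x : ℕ} : x ∈ idList n ↔ 1 ≤ x ∧ x ≤ n := by
  simp only [idList, List.mem_map, List.mem_range]
  constructor
  · rintro ⟨y, hy, hyx⟩; omega
  · rintro ⟨h1, h2⟩; exact ⟨x - 1, by omega, by omega⟩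

theorem IsPermList.max?_eq {n : ℕ} {l : List ℕ} (hn : 1 ≤ n) (hl : IsPermList n l) :
    l.max? = some n :=
  List.max?_eq_some_iff.mpr ⟨hl.mem_iff.mpr (mem_idList.mpr ⟨hn, le_rfl⟩),
    fun _ hx => (mem_idList.mp (hl.mem_iff.mp hx)).2⟩

theorem IsPermList.nodup {n : ℕ} {l : List ℕ} (hl : IsPermList n l) : l.Nodup :=
  hl.nodup_iff.mpr (List.nodup_range.map (add_left_injective 1))

theorem IsPermList.forall_lt_of_append_singleton {n : ℕ} {ρ : List ℕ}
    (h : IsPermList n (ρ ++ [n])) : ∀ x ∈ ρ, x < n := by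
  intro x hx
  have hle := (mem_idList.mp (h.mem_iff.mp (List.mem_append_left [n] hx))).2
  have hne := (List.nodup_append.mp h.nodup).2.2 x hx n (List.mem_singleton_self n)
  omega

/-- A permutation `π` of size `n ≥ 1` is in the image of bubblesort iff `πₙ = n`. -/
theorem stmt_1 (n : ℕ) (hn : 1 ≤ n) (π : List ℕ) (hπ : IsPermList n π) :
    (∃ τ, IsPermList n τ ∧ bpass τ = π) ↔ π.getLast? = some n := by
  constructor
  · rintro ⟨τ, hτ, rfl⟩
    rw [getLast?_bpass, hτ.max?_eq hn]
  · intro hlast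
    obtain ⟨ρ, rfl⟩ : ∃ ρ, π = ρ ++ [n] := ⟨_, (List.dropLast_append_getLast? n hlast).symm⟩
    exact ⟨n :: ρ, (List.perm_append_singleton n ρ).symm.trans hπ,
      bpass_cons_of_forall_lt hπ.forall_lt_of_append_singleton⟩
end

section
/- For every permutation π, the set of positions (equivalently, values) of the left-to-right maxima of π is a subset of the set of left-to-right maxima of B(π). -/
/-- `v` occurs in `l` with all earlier entries smaller. -/
def LTRVal (l : List ℕ) (v : ℕ) : Prop :=
  ∃ l1 l2, l = l1 ++ v :: l2 ∧ ∀ x ∈ l1, x < v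

lemma ltrval_cons_of {l : List ℕ} {v : ℕ} (a : ℕ) (ha : a < v) (h : LTRVal l v) :
    LTRVal (a :: l) v := by
  obtain ⟨l1, l2, rfl, h2⟩ := h
  refine ⟨a :: l1, l2, rfl, ?_⟩
  intro x hx
  rcases List.mem_cons.mp hx with rfl | hx
  · exact ha
  · exact h2 x hx

lemma bpass_ltrval : ∀ (l : List ℕ) (v : ℕ), LTRVal l v → LTRVal (bpass l) v := by
  intro l
  induction l using bpass.induct with
  | case1 => intro v h; simpa [bpass] using h
  | case2 a => intro v h; simpa [bpass] using h
  | case3 a b t hlt ih =>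
    intro v h
    obtain ⟨l1, l2, heq, hall⟩ := h
    rw [bpass, if_pos hlt]
    rcases l1 with _ | ⟨x, _ | ⟨y, l1⟩⟩
    · simp only [List.nil_append, List.cons.injEq] at heq
      obtain ⟨rfl, rfl⟩ := heq
      exact ltrval_cons_of b hlt (ih a ⟨[], t, rfl, by simp⟩)
    · simp only [List.cons_append, List.nil_append, List.cons.injEq] at heq
      obtain ⟨rfl, rfl, rfl⟩ := heq
      exact absurd (hall a (by simp)) (by omega)
    · simp only [List.cons_append, List.cons.injEq] at heq
      obtain ⟨rfl, rfl, rfl⟩ := heq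
      have ha : a < v := hall a (by simp)
      have hb : b < v := hall b (by simp)
      refine ltrval_cons_of b hb (ih v ⟨a :: l1, l2, rfl, ?_⟩)
      intro x hx
      rcases List.mem_cons.mp hx with rfl | hx
      · exact ha
      · exact hall x (by simp [hx])
  | case4 a b t hlt ih =>
    intro v h
    obtain ⟨l1, l2, heq, hall⟩ := h
    rw [bpass, if_neg hlt]
    rcases l1 with _ | ⟨x, _ | ⟨y, l1⟩⟩
    · simp only [List.nil_append, List.cons.injEq] at heq
      obtain ⟨rfl, rfl⟩ := heq
      exact ⟨[], _, rfl, by simp⟩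
    · simp only [List.cons_append, List.nil_append, List.cons.injEq] at heq
      obtain ⟨rfl, rfl, rfl⟩ := heq
      exact ltrval_cons_of a (hall a (by simp)) (ih b ⟨[], t, rfl, by simp⟩)
    · simp only [List.cons_append, List.cons.injEq] at heq
      obtain ⟨rfl, rfl, rfl⟩ := heq
      have ha : a < v := hall a (by simp)
      have hb : b < v := hall b (by simp)
      refine ltrval_cons_of a ha (ih v ⟨b :: l1, l2, rfl, ?_⟩)
      intro x hx
      rcases List.mem_cons.mp hx with rfl | hx
      · exact hb
      · exact hall x (by simp [hx])

lemma isltr_to_val {l : List ℕ} {j : ℕ} (h : IsLTRMax l j) : LTRVal l (l.getD j 0) := by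
  obtain ⟨hj, hmax⟩ := h
  refine ⟨l.take j, l.drop (j + 1), ?_, ?_⟩
  · conv_lhs => rw [← List.take_append_drop j l]
    rw [List.drop_eq_getElem_cons hj, List.getD_eq_getElem l 0 hj]
  · intro x hx
    obtain ⟨i, hi, hxi⟩ := List.getElem_of_mem hx
    have hij : i < j := lt_of_lt_of_le hi (by simp [List.length_take])
    have : x = l.getD i 0 := by
      rw [← hxi, List.getElem_take, List.getD_eq_getElem l 0 (lt_of_lt_of_le hij (le_of_lt hj))]
    rw [this]
    exact hmax i hij

lemma val_to_isltr {l : List ℕ} {v : ℕ} (h : LTRVal l v) :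
    ∃ i, IsLTRMax l i ∧ l.getD i 0 = v := by
  obtain ⟨l1, l2, rfl, hall⟩ := h
  have hlen : l1.length < (l1 ++ v :: l2).length := by simp
  have hv : (l1 ++ v :: l2).getD l1.length 0 = v := by
    rw [List.getD_eq_getElem _ 0 hlen, List.getElem_append_right (le_refl _)]
    simp
  refine ⟨l1.length, ⟨hlen, ?_⟩, hv⟩
  intro i hi
  rw [hv, List.getD_eq_getElem _ 0 (lt_trans hi hlen), List.getElem_append_left hi]
  exact hall _ (l1.getElem_mem hi)

/-- Every left-to-right maximum (value) of `π` is also a left-to-right maximum of `bpass π`. -/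
theorem stmt_2 (n : ℕ) (π : List ℕ) (hπ : IsPermList n π) (j : ℕ) (hj : IsLTRMax π j) :
    ∃ i, IsLTRMax (bpass π) i ∧ (bpass π).getD i 0 = π.getD j 0 :=
  val_to_isltr (bpass_ltrval π _ (isltr_to_val hj))
end

section
/- For 0 ≤ k ≤ n−1, the number of permutations of size n sorted by at most k passes of bubblesort is (k+1)^(n−k−1) · (k+1)!. Consequently, the number of permutations of size n requiring exactly k passes is k!·((k+1)^(n−k) − k^(n−k)). -/
/-!
Let `c_x(σ)` be the number of entries larger than `x` to the left of `x` in `σ` (the inversion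
table). One pass of bubblesort lowers every positive `c_x` by one, so `k` passes sort `σ` iff all
`c_x(σ) ≤ k`. A permutation is rebuilt from its inversion table by inserting its values from the
largest down, the value with `i` larger values going to position `c_x ≤ i`; hence exactly
`∏_{i<n} min(i+1, k+1) = (k+1)^(n-k-1) (k+1)!` permutations have all `c_x ≤ k`. The nodes at height
exactly `k` are those counted for `k` but not for `k - 1`.
-/

/-- For `x ∈ l`, the number of entries of `l` larger than `x` to its left; over all `x` these
form the inversion table of `l`. For `x ∉ l` it counts all entries larger than `x`. -/
def greaterBefore (x : ℕ) : List ℕ → ℕ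
  | [] => 0
  | a :: l => if a = x then 0 else (if x < a then 1 else 0) + greaterBefore x l

@[simp]
lemma greaterBefore_cons_self (x : ℕ) (l : List ℕ) : greaterBefore x (x :: l) = 0 := by
  simp [greaterBefore]

lemma greaterBefore_cons_of_ne {a x : ℕ} (h : a ≠ x) (l : List ℕ) :
    greaterBefore x (a :: l) = (if x < a then 1 else 0) + greaterBefore x l := by
  simp [greaterBefore, h]

lemma greaterBefore_cons_of_lt {a x : ℕ} (h : a < x) (l : List ℕ) :
    greaterBefore x (a :: l) = greaterBefore x l := by
  simp [greaterBefore_cons_of_ne h.ne, h.not_gt]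

lemma bpass_perm (l : List ℕ) : (bpass l).Perm l := by
  induction l using bpass.induct with
  | case1 | case2 => simp [bpass]
  | case3 a b l h ih => simpa [bpass, h] using (ih.cons b).trans (List.Perm.swap a b l)
  | case4 a b l h ih => simpa [bpass, h] using ih.cons a

lemma iterate_bpass_perm (k : ℕ) (l : List ℕ) : (bpass^[k] l).Perm l := by
  induction k with
  | zero => rfl
  | succ k ih => rw [Function.iterate_succ_apply']; exact (bpass_perm _).trans ih

lemma bpass_of_pairwise_lt {l : List ℕ} (hl : l.Pairwise (· < ·)) : bpass l = l := by
  induction l using bpass.induct with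
  | case1 | case2 => simp [bpass]
  | case3 a b l h _ => exact absurd (List.rel_of_pairwise_cons hl List.mem_cons_self) h.not_gt
  | case4 a b l h ih => rw [bpass, if_neg h, ih hl.of_cons]

/-- A pass carries the running maximum to the right: an entry with a larger entry to its left is
jumped over by exactly one of them, the maximum of the prefix before it. -/
lemma greaterBefore_bpass {l : List ℕ} (hl : l.Nodup) {x : ℕ} (hx : x ∈ l) :
    greaterBefore x (bpass l) = greaterBefore x l - 1 := by
  induction l using bpass.induct with
  | case1 => simp at hx
  | case2 a => simp [List.mem_singleton.1 hx, bpass]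
  | case3 a b l h ih =>
    obtain ⟨⟨hab, hal⟩, hbl, hl⟩ : (a ≠ b ∧ a ∉ l) ∧ b ∉ l ∧ l.Nodup := by simpa using hl
    have ih' := ih (List.nodup_cons.2 ⟨hal, hl⟩)
    rw [bpass, if_pos h]
    rcases List.mem_cons.1 hx with rfl | hx
    · simpa [greaterBefore_cons_of_ne h.ne, h.le] using ih' List.mem_cons_self
    rcases List.mem_cons.1 hx with rfl | hx
    · simp [greaterBefore_cons_of_ne hab, h]
    · have hax : a ≠ x := by rintro rfl; exact hal hx
      have hbx : b ≠ x := by rintro rfl; exact hbl hx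
      rw [greaterBefore_cons_of_ne hbx, ih' (List.mem_cons_of_mem _ hx),
        greaterBefore_cons_of_ne hax, greaterBefore_cons_of_ne hax, greaterBefore_cons_of_ne hbx]
      split_ifs <;> omega
  | case4 a b l h ih =>
    obtain ⟨⟨hab, hal⟩, hbl, hl⟩ : (a ≠ b ∧ a ∉ l) ∧ b ∉ l ∧ l.Nodup := by simpa using hl
    rw [bpass, if_neg h]
    rcases List.mem_cons.1 hx with rfl | hx
    · simp
    · have hax : a ≠ x := by rintro rfl; exact (List.mem_cons.1 hx).elim hab hal
      rw [greaterBefore_cons_of_ne hax, greaterBefore_cons_of_ne hax,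
        ih (List.nodup_cons.2 ⟨hbl, hl⟩) hx]
      rcases List.mem_cons.1 hx with rfl | hx
      · simp [h]
      · have hbx : b ≠ x := by rintro rfl; exact hbl hx
        rw [greaterBefore_cons_of_ne hbx]
        split_ifs <;> omega

lemma greaterBefore_iterate_bpass (k : ℕ) {l : List ℕ} (hl : l.Nodup) {x : ℕ} (hx : x ∈ l) :
    greaterBefore x (bpass^[k] l) = greaterBefore x l - k := by
  induction k generalizing l with
  | zero => rfl
  | succ k ih =>
    rw [Function.iterate_succ_apply, ih ((bpass_perm l).nodup_iff.2 hl)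
      ((bpass_perm l).mem_iff.2 hx), greaterBefore_bpass hl hx]
    omega

lemma pairwise_lt_iff_greaterBefore_eq_zero {l : List ℕ} (hl : l.Nodup) :
    l.Pairwise (· < ·) ↔ ∀ x ∈ l, greaterBefore x l = 0 := by
  induction l with
  | nil => simp
  | cons a l ih =>
    obtain ⟨hal, hl⟩ := List.nodup_cons.1 hl
    have hne : ∀ x ∈ l, a ≠ x := fun x hx h => hal (h ▸ hx)
    simp only [List.pairwise_cons, List.forall_mem_cons, greaterBefore_cons_self, true_and,
      ih hl]
    constructor
    · rintro ⟨hlt, h0⟩ x hx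
      rw [greaterBefore_cons_of_lt (hlt x hx), h0 x hx]
    · intro h0
      have h0' (x : ℕ) (hx : x ∈ l) : a < x ∧ greaterBefore x l = 0 := by
        have := h0 x hx
        rw [greaterBefore_cons_of_ne (hne x hx)] at this
        split_ifs at this with hxa
        · omega
        · exact ⟨lt_of_le_of_ne (not_lt.1 hxa) (hne x hx), by omega⟩
      exact ⟨fun x hx => (h0' x hx).1, fun x hx => (h0' x hx).2⟩

lemma iterate_bpass_eq_iff {s σ : List ℕ} (hs : s.Pairwise (· < ·)) (hσ : σ.Perm s) (k : ℕ) :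
    bpass^[k] σ = s ↔ ∀ x ∈ σ, greaterBefore x σ ≤ k := by
  have hσnd : σ.Nodup := hσ.nodup_iff.2 hs.nodup
  have hBnd : (bpass^[k] σ).Nodup := (iterate_bpass_perm k σ).nodup_iff.2 hσnd
  have hmem {x : ℕ} : x ∈ bpass^[k] σ ↔ x ∈ σ := (iterate_bpass_perm k σ).mem_iff
  have hB {x : ℕ} (hx : x ∈ σ) : greaterBefore x (bpass^[k] σ) = greaterBefore x σ - k :=
    greaterBefore_iterate_bpass k hσnd hx
  constructor
  · intro h x hx
    have h0 := (pairwise_lt_iff_greaterBefore_eq_zero hBnd).1 (h ▸ hs) x (hmem.2 hx)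
    rw [hB hx] at h0
    omega
  · intro h
    have hsorted : (bpass^[k] σ).Pairwise (· < ·) :=
      (pairwise_lt_iff_greaterBefore_eq_zero hBnd).2 fun x hx => by
        have := h x (hmem.1 hx); rw [hB (hmem.1 hx)]; omega
    exact List.Perm.eq_of_pairwise' (r := (· ≤ ·)) (hsorted.imp le_of_lt) (hs.imp le_of_lt)
      ((iterate_bpass_perm k σ).trans hσ)

lemma greaterBefore_insertIdx_of_lt {a x : ℕ} (h : a < x) (l : List ℕ) (p : ℕ) :
    greaterBefore x (l.insertIdx p a) = greaterBefore x l := by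
  induction l generalizing p with
  | nil => cases p <;> simp [greaterBefore_cons_of_lt h]
  | cons b l ih =>
    cases p with
    | zero => rw [List.insertIdx_zero, greaterBefore_cons_of_lt h]
    | succ p =>
      by_cases hb : b = x
      · simp [List.insertIdx_succ_cons, hb]
      · rw [List.insertIdx_succ_cons, greaterBefore_cons_of_ne hb, greaterBefore_cons_of_ne hb, ih]

lemma greaterBefore_insertIdx_self {a : ℕ} {l : List ℕ} (hl : ∀ y ∈ l, a < y) {p : ℕ}
    (hp : p ≤ l.length) : greaterBefore a (l.insertIdx p a) = p := by
  induction l generalizing p with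
  | nil => simp_all
  | cons b l ih =>
    cases p with
    | zero => simp
    | succ p =>
      have hab : a < b := hl b List.mem_cons_self
      rw [List.insertIdx_succ_cons, greaterBefore_cons_of_ne hab.ne', if_pos hab,
        ih (fun y hy => hl y (List.mem_cons_of_mem _ hy)) (by simpa using hp), Nat.add_comm]

lemma greaterBefore_lt_length {x : ℕ} {l : List ℕ} (hx : x ∈ l) :
    greaterBefore x l < l.length := by
  induction l with
  | nil => simp at hx
  | cons a l ih =>
    by_cases hax : a = x
    · simp [hax]
    · have := ih ((List.mem_cons.1 hx).resolve_left (Ne.symm hax))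
      rw [greaterBefore_cons_of_ne hax, List.length_cons]
      split_ifs <;> omega

lemma greaterBefore_erase_of_lt {a x : ℕ} (h : a < x) (l : List ℕ) :
    greaterBefore x (l.erase a) = greaterBefore x l := by
  induction l with
  | nil => rfl
  | cons b l ih =>
    by_cases hba : b = a
    · rw [hba, List.erase_cons_head, greaterBefore_cons_of_lt h]
    · rw [List.erase_cons_tail (by simpa using hba)]
      by_cases hbx : b = x
      · simp [hbx]
      · rw [greaterBefore_cons_of_ne hbx, greaterBefore_cons_of_ne hbx, ih]

lemma erase_insertIdx_of_not_mem {a : ℕ} {l : List ℕ} (ha : a ∉ l) (p : ℕ) :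
    (l.insertIdx p a).erase a = l := by
  induction l generalizing p with
  | nil => cases p <;> simp
  | cons b l ih =>
    cases p with
    | zero => simp
    | succ p =>
      obtain ⟨hab, hal⟩ := List.ne_and_not_mem_of_not_mem_cons ha
      rw [List.insertIdx_succ_cons, List.erase_cons_tail (by simpa using Ne.symm hab), ih hal]

/-- For the minimum `x` of `l`, `greaterBefore x l` is the position of `x`. -/
lemma insertIdx_greaterBefore_erase_of_forall_le {x : ℕ} {l : List ℕ} (hx : x ∈ l)
    (hmin : ∀ y ∈ l, x ≤ y) : (l.erase x).insertIdx (greaterBefore x l) x = l := by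
  induction l with
  | nil => simp at hx
  | cons a l ih =>
    by_cases hax : a = x
    · simp [hax]
    · have hxa : x < a := lt_of_le_of_ne (hmin a List.mem_cons_self) (Ne.symm hax)
      rw [greaterBefore_cons_of_ne hax, if_pos hxa, List.erase_cons_tail (by simpa using hax),
        Nat.add_comm, List.insertIdx_succ_cons,
        ih ((List.mem_cons.1 hx).resolve_left (Ne.symm hax))
          (fun y hy => hmin y (List.mem_cons_of_mem _ hy))]

def permsGreaterBeforeLe (s : List ℕ) (k : ℕ) : Finset (List ℕ) :=
  s.permutations.toFinset.filter fun σ => ∀ x ∈ σ, greaterBefore x σ ≤ k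

lemma mem_permsGreaterBeforeLe {s σ : List ℕ} {k : ℕ} :
    σ ∈ permsGreaterBeforeLe s k ↔ σ.Perm s ∧ ∀ x ∈ σ, greaterBefore x σ ≤ k := by
  simp [permsGreaterBeforeLe, List.mem_permutations]

section Counting

variable {a k : ℕ} {s : List ℕ}

lemma insertIdx_mem_permsGreaterBeforeLe (ha : ∀ y ∈ s, a < y) {p : ℕ}
    (hp : p ∈ Finset.range (min (s.length + 1) (k + 1))) {τ : List ℕ}
    (hτ : τ ∈ permsGreaterBeforeLe s k) : τ.insertIdx p a ∈ permsGreaterBeforeLe (a :: s) k := by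
  rw [Finset.mem_range, lt_min_iff, Nat.lt_succ_iff, Nat.lt_succ_iff] at hp
  obtain ⟨hτs, hτk⟩ := mem_permsGreaterBeforeLe.1 hτ
  have hpτ : p ≤ τ.length := hτs.length_eq ▸ hp.1
  refine mem_permsGreaterBeforeLe.2 ⟨(List.perm_insertIdx a τ hpτ).trans (hτs.cons a), ?_⟩
  intro x hx
  rcases List.mem_cons.1 ((List.perm_insertIdx a τ hpτ).subset hx) with rfl | hxτ
  · rw [greaterBefore_insertIdx_self (fun y hy => ha y (hτs.subset hy)) hpτ]
    exact hp.2
  · rw [greaterBefore_insertIdx_of_lt (ha x (hτs.subset hxτ))]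
    exact hτk x hxτ

lemma erase_mem_permsGreaterBeforeLe (ha : ∀ y ∈ s, a < y) {σ : List ℕ}
    (hσ : σ ∈ permsGreaterBeforeLe (a :: s) k) : σ.erase a ∈ permsGreaterBeforeLe s k := by
  obtain ⟨hσs, hσk⟩ := mem_permsGreaterBeforeLe.1 hσ
  have herase : (σ.erase a).Perm s := by simpa using hσs.erase a
  refine mem_permsGreaterBeforeLe.2 ⟨herase, fun x hx => ?_⟩
  rw [greaterBefore_erase_of_lt (ha x (herase.subset hx))]
  exact hσk x (List.mem_of_mem_erase hx)

lemma greaterBefore_mem_range_of_mem_permsGreaterBeforeLe {σ : List ℕ}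
    (hσ : σ ∈ permsGreaterBeforeLe (a :: s) k) :
    greaterBefore a σ ∈ Finset.range (min (s.length + 1) (k + 1)) := by
  obtain ⟨hσs, hσk⟩ := mem_permsGreaterBeforeLe.1 hσ
  have haσ : a ∈ σ := hσs.mem_iff.2 List.mem_cons_self
  have hlen := greaterBefore_lt_length haσ
  rw [hσs.length_eq, List.length_cons] at hlen
  exact Finset.mem_range.2 (lt_min hlen (Nat.lt_succ_of_le (hσk a haσ)))

/-- Removing the smallest value `a` records its position `greaterBefore a σ` and leaves the
values of `greaterBefore` at all other entries unchanged. -/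
lemma card_permsGreaterBeforeLe_cons (ha : ∀ y ∈ s, a < y) :
    (permsGreaterBeforeLe (a :: s) k).card =
      min (s.length + 1) (k + 1) * (permsGreaterBeforeLe s k).card := by
  rw [← Finset.card_range (min _ _), ← Finset.card_product]
  symm
  refine Finset.card_nbij' (fun pτ => pτ.2.insertIdx pτ.1 a)
    (fun σ => (greaterBefore a σ, σ.erase a)) ?_ ?_ ?_ ?_
  · rintro ⟨p, τ⟩ hpτ
    obtain ⟨hp, hτ⟩ := Finset.mem_product.1 hpτ
    exact insertIdx_mem_permsGreaterBeforeLe ha hp hτ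
  · intro σ hσ
    exact Finset.mem_product.2 ⟨greaterBefore_mem_range_of_mem_permsGreaterBeforeLe hσ,
      erase_mem_permsGreaterBeforeLe ha hσ⟩
  · rintro ⟨p, τ⟩ hpτ
    obtain ⟨hp, hτ⟩ : p ∈ _ ∧ τ ∈ _ := Finset.mem_product.1 hpτ
    obtain ⟨hτs, -⟩ := mem_permsGreaterBeforeLe.1 hτ
    have haτ : ∀ y ∈ τ, a < y := fun y hy => ha y (hτs.subset hy)
    have hpτ : p ≤ τ.length := by
      rw [Finset.mem_range, lt_min_iff] at hp
      have := hτs.length_eq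
      omega
    simp only [Prod.mk.injEq]
    exact ⟨greaterBefore_insertIdx_self haτ hpτ,
      erase_insertIdx_of_not_mem (fun h => (haτ a h).false) p⟩
  · intro σ hσ
    obtain ⟨hσs, -⟩ := mem_permsGreaterBeforeLe.1 hσ
    refine insertIdx_greaterBefore_erase_of_forall_le (hσs.mem_iff.2 List.mem_cons_self)
      fun y hy => ?_
    rcases List.mem_cons.1 (hσs.subset hy) with rfl | hys
    exacts [le_rfl, (ha y hys).le]

lemma card_permsGreaterBeforeLe (hs : s.Pairwise (· < ·)) :
    (permsGreaterBeforeLe s k).card = ∏ i ∈ Finset.range s.length, min (i + 1) (k + 1) := by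
  induction s with
  | nil => simp [permsGreaterBeforeLe, Finset.filter_singleton]
  | cons a s ih =>
    obtain ⟨ha, hs⟩ := List.pairwise_cons.1 hs
    rw [card_permsGreaterBeforeLe_cons ha, ih hs, List.length_cons, Finset.prod_range_succ,
      Nat.mul_comm]

end Counting

lemma prod_range_min_eq {n k : ℕ} (h : k < n) :
    ∏ i ∈ Finset.range n, min (i + 1) (k + 1) = (k + 1) ^ (n - k - 1) * Nat.factorial (k + 1) := by
  obtain ⟨m, rfl⟩ := Nat.exists_eq_add_of_lt h
  rw [show k + m + 1 = (k + 1) + m by omega, Finset.prod_range_add,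
    ← Finset.prod_range_add_one_eq_factorial, Nat.mul_comm]
  congr 1
  · rw [show k + 1 + m - k - 1 = m by omega,
      Finset.prod_congr rfl fun i _ => (by omega : min (k + 1 + i + 1) (k + 1) = k + 1),
      Finset.prod_const, Finset.card_range]
  · exact Finset.prod_congr rfl fun i hi => by rw [Finset.mem_range] at hi; omega

lemma permsGreaterBeforeLe_mono (s : List ℕ) : Monotone (permsGreaterBeforeLe s) := by
  intro j k hjk σ hσ
  obtain ⟨hσs, hσj⟩ := mem_permsGreaterBeforeLe.1 hσ
  exact mem_permsGreaterBeforeLe.2 ⟨hσs, fun x hx => (hσj x hx).trans hjk⟩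

lemma idList_pairwise_lt (n : ℕ) : (idList n).Pairwise (· < ·) :=
  List.pairwise_lt_range.map _ fun _ _ => Nat.succ_lt_succ

lemma iterate_bpass_idList (n k : ℕ) : bpass^[k] (idList n) = idList n :=
  Function.iterate_fixed (bpass_of_pairwise_lt (idList_pairwise_lt n)) k

lemma setOf_iterate_bpass_eq_idList (n k : ℕ) :
    {σ | IsPermList n σ ∧ bpass^[k] σ = idList n} = ↑(permsGreaterBeforeLe (idList n) k) := by
  ext σ
  rw [Set.mem_ofPred_eq, Finset.mem_coe, mem_permsGreaterBeforeLe]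
  exact and_congr_right fun hσ => iterate_bpass_eq_iff (idList_pairwise_lt n) hσ k

lemma card_permsGreaterBeforeLe_idList {n k : ℕ} (h : k < n) :
    (permsGreaterBeforeLe (idList n) k).card = (k + 1) ^ (n - k - 1) * Nat.factorial (k + 1) := by
  rw [card_permsGreaterBeforeLe (idList_pairwise_lt n), idList, List.length_map,
    List.length_range, prod_range_min_eq h]

lemma setOf_isNodeAt_idList_zero (n : ℕ) :
    {σ | IsNodeAt n (idList n) σ 0} = {σ | IsPermList n σ ∧ bpass^[0] σ = idList n} := by
  simp [IsNodeAt]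

lemma setOf_isNodeAt_idList_succ (n j : ℕ) :
    {σ | IsNodeAt n (idList n) σ (j + 1)} =
      {σ | IsPermList n σ ∧ bpass^[j + 1] σ = idList n} \
        {σ | IsPermList n σ ∧ bpass^[j] σ = idList n} := by
  ext σ
  simp only [IsNodeAt, Set.mem_ofPred_eq, Set.mem_sdiff, not_and]
  constructor
  · rintro ⟨hσ, hsorted, hmin⟩
    exact ⟨⟨hσ, hsorted⟩, fun _ => hmin j j.lt_succ_self⟩
  · rintro ⟨⟨hσ, hsorted⟩, hnot⟩
    refine ⟨hσ, hsorted, fun i hi hi' => hnot hσ ?_⟩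
    rw [← Nat.sub_add_cancel (Nat.lt_succ_iff.1 hi), Function.iterate_add_apply, hi',
      iterate_bpass_idList]

/-- For `0 ≤ k ≤ n-1`: the number of permutations of size `n` sorted by at most `k`
passes of bubblesort is `(k+1)^(n-k-1)·(k+1)!`, and the number requiring exactly `k`
passes is `k!·((k+1)^(n-k) − k^(n-k))`. -/
theorem stmt_14 (n k : ℕ) (hn : 1 ≤ n) (hk : k ≤ n - 1) :
    Set.ncard {σ : List ℕ | IsPermList n σ ∧ bpass^[k] σ = idList n} =
      (k + 1) ^ (n - k - 1) * Nat.factorial (k + 1) ∧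
    Set.ncard {σ : List ℕ | IsNodeAt n (idList n) σ k} =
      Nat.factorial k * ((k + 1) ^ (n - k) - k ^ (n - k)) := by
  have hcard (m : ℕ) (hm : m ≤ k) :=
    card_permsGreaterBeforeLe_idList (n := n) (k := m) (by omega)
  refine ⟨by rw [setOf_iterate_bpass_eq_idList, Set.ncard_coe_finset, hcard k le_rfl], ?_⟩
  cases k with
  | zero =>
    rw [setOf_isNodeAt_idList_zero, setOf_iterate_bpass_eq_idList, Set.ncard_coe_finset,
      hcard 0 le_rfl]
    simp [Nat.zero_pow hn]
  | succ j =>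
    rw [setOf_isNodeAt_idList_succ, setOf_iterate_bpass_eq_idList, setOf_iterate_bpass_eq_idList,
      ← Finset.coe_sdiff, Set.ncard_coe_finset,
      Finset.card_sdiff_of_subset (permsGreaterBeforeLe_mono _ j.le_succ),
      hcard (j + 1) le_rfl, hcard j j.le_succ]
    obtain ⟨m, hm⟩ : ∃ m, n - (j + 1) = m + 1 := ⟨n - (j + 1) - 1, by omega⟩
    rw [show n - j - 1 = m + 1 by omega, hm, Nat.add_sub_cancel, Nat.factorial_succ (j + 1),
      Nat.mul_sub, pow_succ, pow_succ]
    ring_nf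
end
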